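/- arXiv:1507.08938 — 5 statements merged into one kernel-verified Lean document; each statement's English description precedes it below -/
import Mathlib

section
/- Let f : S¹ → S¹ be a C² expanding map with f' ≥ λ > 1, 0 < θ < 1, and v : S¹ → ℝ continuous. If α and β are two bounded functions on S¹ both satisfying v(x) = α(f(x)) - (f'(x))^θ α(x) and v(x) = β(f(x)) - (f'(x))^θ β(x) for all x, then α = β. -/
open Real

/-- Uniqueness of bounded solutions of the θ-twisted cohomological
equation for a C² expanding circle map (given by its lift). No continuity of the
solutions is assumed, only boundedness. -/
theorem stmt1 (f : ℝ → ℝ) (n : ℕ) (hf : ContDiff ℝ 2 f)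
    (hlift : ∀ x, f (x + 1) = f x + n)
    (lam θ : ℝ) (hlam : 1 < lam) (hθ0 : 0 < θ) (hθ1 : θ < 1)
    (hexp : ∀ x, lam ≤ deriv f x)
    (v : ℝ → ℝ) (hv : Continuous v) (hvper : Function.Periodic v 1)
    (α β : ℝ → ℝ)
    (hαbdd : ∃ C : ℝ, ∀ x, |α x| ≤ C) (hβbdd : ∃ C : ℝ, ∀ x, |β x| ≤ C)
    (hαeq : ∀ x, v x = α (f x) - (deriv f x) ^ θ * α x)
    (hβeq : ∀ x, v x = β (f x) - (deriv f x) ^ θ * β x) :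
    α = β := by
  obtain ⟨C1, hC1⟩ := hαbdd
  obtain ⟨C2, hC2⟩ := hβbdd
  have hγbdd : ∀ x, |α x - β x| ≤ C1 + C2 := fun x =>
    (abs_sub _ _).trans (add_le_add (hC1 x) (hC2 x))
  have hlam0 : (0:ℝ) < lam := lt_trans one_pos hlam
  have hL : 1 < lam ^ θ :=
    (Real.one_lt_rpow_iff_of_pos hlam0).2 (Or.inl ⟨hlam, hθ0⟩)
  have hL0 : (0:ℝ) < lam ^ θ := lt_trans one_pos hL
  have key : ∀ k : ℕ, ∀ x, |α x - β x| ≤ (C1 + C2) / (lam ^ θ) ^ k := by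
    intro k
    induction k with
    | zero => simpa using hγbdd
    | succ k ih =>
      intro x
      have hd : lam ≤ deriv f x := hexp x
      have hd0 : (0:ℝ) < deriv f x := lt_of_lt_of_le hlam0 hd
      have hdp : lam ^ θ ≤ (deriv f x) ^ θ :=
        Real.rpow_le_rpow (le_of_lt hlam0) hd (le_of_lt hθ0)
      have hdp0 : (0:ℝ) < (deriv f x) ^ θ := Real.rpow_pos_of_pos hd0 θ
      have heq : α (f x) - β (f x) = (deriv f x) ^ θ * (α x - β x) := by
        have h1 := hαeq x; have h2 := hβeq x; nlinarith [h1, h2]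
      have hrw : |α x - β x| = |α (f x) - β (f x)| / (deriv f x) ^ θ := by
        rw [heq, abs_mul, abs_of_pos hdp0, mul_div_cancel_left₀ _ (ne_of_gt hdp0)]
      have hCk0 : 0 ≤ (C1 + C2) / (lam ^ θ) ^ k :=
        le_trans (abs_nonneg _) (ih x)
      rw [hrw]
      calc |α (f x) - β (f x)| / (deriv f x) ^ θ
          ≤ ((C1 + C2) / (lam ^ θ) ^ k) / (lam ^ θ) :=
            div_le_div₀ hCk0 (ih (f x)) hL0 hdp
        _ = (C1 + C2) / (lam ^ θ) ^ (k + 1) := by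
            rw [div_div, pow_succ]
  funext x
  have htend : Filter.Tendsto (fun k : ℕ => (C1 + C2) / (lam ^ θ) ^ k)
      Filter.atTop (nhds 0) :=
    Filter.Tendsto.const_div_atTop (tendsto_pow_atTop_atTop_of_one_lt hL) _
  have hle : |α x - β x| ≤ 0 :=
    ge_of_tendsto htend (Filter.Eventually.of_forall fun k => key k x)
  have : α x - β x = 0 := abs_eq_zero.mp (le_antisymm hle (abs_nonneg _))
  linarith
end

section
/- Let λ > 1 be a natural number, f(x) = λx mod 1 on S¹, 0 < θ < 1, and v : S¹ → ℝ continuous with M = max |v|. Let α(x) = -∑_{i=0}^∞ v(fⁱ(x)) λ^{-θ(i+1)}. Fix a natural N, 0 < δ₁ < 1 and h > 0 with δ₁ ≤ h λ^N. Then for every x ∈ S¹, |∑_{i=N+1}^∞ λ^{-θ(i+1)} (v(fⁱ(x+h)) - v(fⁱ(x)))| ≤ (2M / ((1 - λ^{-θ}) λ^{2θ} δ₁^θ)) · h^θ. -/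
open Real

/-!
Each term of the tail is at most `2M` times the weight `b^(-θ(i+1))`, so the tail is bounded by
`2M b^(-θ(N+2)) / (1 - b^(-θ))`. The hypothesis `δ₁ ≤ h b^N` turns the factor `b^(-θN)` into
`(h / δ₁)^θ`, which is where the Hölder factor `h^θ` comes from.
-/

theorem norm_tsum_le_of_norm_le_geometric {E : Type*} [SeminormedAddCommGroup E] {f : ℕ → E}
    {C r : ℝ} (hr0 : 0 ≤ r) (hr1 : r < 1) (hf : ∀ i, ‖f i‖ ≤ C * r ^ i) :
    ‖∑' i, f i‖ ≤ C / (1 - r) := by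
  rw [div_eq_mul_inv]
  exact tsum_of_norm_bounded ((hasSum_geometric_of_lt_one hr0 hr1).mul_left C) hf

theorem rpow_neg_pow_le_div_of_le_mul_pow {b θ δ h : ℝ} (hb : 0 < b) (hθ : 0 ≤ θ) (hδ : 0 < δ)
    {N : ℕ} (hδh : δ ≤ h * b ^ N) :
    (b ^ (-θ)) ^ (N + 2) ≤ h ^ θ / (b ^ (2 * θ) * δ ^ θ) := by
  have hbN : 0 < b ^ N := by positivity
  have hscale : (b ^ (-θ)) ^ (N + 2) * b ^ (2 * θ) = ((b ^ N)⁻¹) ^ θ := by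
    rw [← rpow_mul_natCast hb.le, ← rpow_add hb, inv_rpow hbN.le, ← rpow_natCast,
      ← rpow_mul hb.le, ← rpow_neg hb.le]
    congr 1
    push_cast
    ring
  rw [le_div_iff₀ (by positivity)]
  calc (b ^ (-θ)) ^ (N + 2) * (b ^ (2 * θ) * δ ^ θ) = (δ * (b ^ N)⁻¹) ^ θ := by
        rw [← mul_assoc, hscale, mul_rpow hδ.le (by positivity), mul_comm]
    _ ≤ h ^ θ := by
        gcongr
        rwa [← div_eq_mul_inv, div_le_iff₀ hbN]

theorem stmt6_general (b : ℕ) (hb : 1 < b) (θ : ℝ) (hθ0 : 0 < θ)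
    (v : ℝ → ℝ)
    (M : ℝ) (hM : ∀ y, |v y| ≤ M)
    (N : ℕ) (δ₁ h : ℝ) (hδ₁0 : 0 < δ₁)
    (hhl : δ₁ ≤ h * (b : ℝ) ^ N) (x : ℝ) :
    |∑' i : ℕ,
        (b : ℝ) ^ (-(θ * ((N : ℝ) + 1 + (i : ℝ) + 1))) *
          (v ((b : ℝ) ^ (N + 1 + i) * (x + h)) - v ((b : ℝ) ^ (N + 1 + i) * x))|
      ≤ 2 * M / ((1 - (b : ℝ) ^ (-θ)) * (b : ℝ) ^ (2 * θ) * δ₁ ^ θ) * h ^ θ := by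
  have hb1 : (1 : ℝ) < b := by exact_mod_cast hb
  set r : ℝ := (b : ℝ) ^ (-θ)
  have hr0 : 0 ≤ r := by positivity
  have hr1 : r < 1 := rpow_lt_one_of_one_lt_of_neg hb1 (by linarith)
  have hM0 : 0 ≤ M := (abs_nonneg _).trans (hM 0)
  have hterm : ∀ i : ℕ, ‖(b : ℝ) ^ (-(θ * ((N : ℝ) + 1 + (i : ℝ) + 1))) *
      (v ((b : ℝ) ^ (N + 1 + i) * (x + h)) - v ((b : ℝ) ^ (N + 1 + i) * x))‖ ≤
      2 * M * r ^ (N + 2) * r ^ i := by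
    intro i
    rw [Real.norm_eq_abs, abs_mul, show -(θ * ((N : ℝ) + 1 + i + 1)) = -θ * ↑(N + 2 + i) by
      push_cast; ring, rpow_mul_natCast (by positivity), abs_of_nonneg (by positivity), pow_add,
      mul_comm, mul_assoc (2 * M)]
    refine mul_le_mul_of_nonneg_right ?_ (by positivity)
    exact (abs_sub _ _).trans ((add_le_add (hM _) (hM _)).trans_eq (two_mul M).symm)
  calc _ ≤ 2 * M * r ^ (N + 2) / (1 - r) := norm_tsum_le_of_norm_le_geometric hr0 hr1 hterm
    _ = 2 * M / (1 - r) * r ^ (N + 2) := by ring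
    _ ≤ 2 * M / (1 - r) * (h ^ θ / ((b : ℝ) ^ (2 * θ) * δ₁ ^ θ)) := by
        refine mul_le_mul_of_nonneg_left ?_ (div_nonneg (by positivity) (by linarith))
        exact rpow_neg_pow_le_div_of_le_mul_pow (by positivity) hθ0.le hδ₁0 hhl
    _ = _ := by simp only [div_eq_mul_inv, mul_inv]; ring

/-- linear tail bound: for `f = E_b`, `b ∈ ℕ`, `b > 1`
(on the line: `f^[i] x = b^i x`, `v` 1-periodic), `0 < θ < 1`, `M` a bound for `|v|`,
`0 < δ₁ < 1`, `h > 0` with `δ₁ ≤ h b^N`: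
`|∑_{i≥N+1} b^{-θ(i+1)} (v(bⁱ(x+h)) - v(bⁱx))| ≤ (2M/((1-b^{-θ}) b^{2θ} δ₁^θ)) h^θ`. -/
theorem stmt6 (b : ℕ) (hb : 1 < b) (θ : ℝ) (hθ0 : 0 < θ) (hθ1 : θ < 1)
    (v : ℝ → ℝ) (hv : Continuous v) (hvper : Function.Periodic v 1)
    (M : ℝ) (hM : ∀ y, |v y| ≤ M)
    (N : ℕ) (δ₁ h : ℝ) (hδ₁0 : 0 < δ₁) (hδ₁1 : δ₁ < 1)
    (hh : 0 < h) (hhl : δ₁ ≤ h * (b : ℝ) ^ N) (x : ℝ) :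
    |∑' i : ℕ,
        (b : ℝ) ^ (-(θ * ((N : ℝ) + 1 + (i : ℝ) + 1))) *
          (v ((b : ℝ) ^ (N + 1 + i) * (x + h)) - v ((b : ℝ) ^ (N + 1 + i) * x))|
      ≤ 2 * M / ((1 - (b : ℝ) ^ (-θ)) * (b : ℝ) ^ (2 * θ) * δ₁ ^ θ) * h ^ θ :=
  stmt6_general b hb θ hθ0 v M hM N δ₁ h hδ₁0 hhl x
end

section
/- Let λ > 1 be a natural number, f(x) = λx mod 1, 0 < θ < 1, and v : S¹ → ℝ continuous. Then the unique bounded solution α(x) = -∑_{i=0}^∞ v(fⁱ(x)) λ^{-θ(i+1)} of the twisted cohomological equation is a θ-Hölder continuous function, with Hölder constant bounded explicitly by 2M'/(λ^{-θ}(1-λ^{θ-1})) + 4M/(λ^{2θ}(1-λ^{-θ})) when v is C¹ with max|v| = M and max|v'| = M'. -/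
/-!
Write `β = b ^ (-θ)`, so `α (x + h) - α x = ∑ βⁱ⁺¹ (v (bⁱ x) - v (bⁱ (x + h)))`. For the first
indices, while `bⁱ h ≤ 1`, the mean value theorem bounds the `i`-th difference by `M' bⁱ h`, and these
terms form a geometric sum in `b ^ (1 - θ) > 1` controlled by its last term, of size `h ^ θ`. The
remaining differences are bounded by `min (2M) (M'/2)` (periodicity), and their weights form a
geometric tail whose first weight `βⁿ`, with `bⁿ h > 1`, is at most `h ^ θ`. Boundedness of `α`
handles increments `h ≥ 1/(2b)`.
-/

lemma abs_sub_le_of_abs_deriv_le {v : ℝ → ℝ} {L : ℝ} (hv : Differentiable ℝ v)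
    (hL : ∀ y, |deriv v y| ≤ L) (y z : ℝ) : |v y - v z| ≤ L * |y - z| := by
  simpa using Convex.norm_image_sub_le_of_norm_deriv_le (fun w _ => hv w) (fun w _ => hL w)
    convex_univ (Set.mem_univ z) (Set.mem_univ y)

/-- Shift `y` by an integer to within `1 / 2` of `z`. -/
lemma Function.Periodic.abs_sub_le_half {v : ℝ → ℝ} {L : ℝ} (hper : Function.Periodic v 1)
    (hL : 0 ≤ L) (hlip : ∀ y z, |v y - v z| ≤ L * |y - z|) (y z : ℝ) : |v y - v z| ≤ L / 2 := by
  have hshift : v (y - round (y - z) * 1) = v y := hper.sub_int_mul_eq _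
  calc |v y - v z| = |v (y - round (y - z) * 1) - v z| := by rw [hshift]
    _ ≤ L * |y - round (y - z) * 1 - z| := hlip _ _
    _ ≤ L * (1 / 2) := by
        gcongr
        rw [mul_one, sub_right_comm]
        exact abs_sub_round _
    _ = L / 2 := by ring

section GeometricWeights

variable {β μ : ℝ} {d : ℕ → ℝ}

lemma norm_pow_succ_mul_le (hβ : 0 ≤ β) (hd : ∀ i, |d i| ≤ μ) (i : ℕ) :
    ‖β ^ (i + 1) * d i‖ ≤ μ * β * β ^ i := by
  rw [Real.norm_eq_abs, abs_mul, abs_of_nonneg (by positivity)]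
  calc β ^ (i + 1) * |d i| ≤ β ^ (i + 1) * μ := by gcongr; exact hd i
    _ = μ * β * β ^ i := by ring

lemma summable_pow_succ_mul (hβ0 : 0 ≤ β) (hβ1 : β < 1) (hd : ∀ i, |d i| ≤ μ) :
    Summable fun i => β ^ (i + 1) * d i :=
  .of_norm_bounded ((summable_geometric_of_lt_one hβ0 hβ1).mul_left (μ * β))
    (norm_pow_succ_mul_le hβ0 hd)

lemma abs_tsum_pow_succ_mul_le (hβ0 : 0 ≤ β) (hβ1 : β < 1) (hd : ∀ i, |d i| ≤ μ) :
    |∑' i, β ^ (i + 1) * d i| ≤ μ * β / (1 - β) := by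
  rw [div_eq_mul_inv, ← Real.norm_eq_abs]
  exact tsum_of_norm_bounded ((hasSum_geometric_of_lt_one hβ0 hβ1).mul_left (μ * β))
    (norm_pow_succ_mul_le hβ0 hd)

end GeometricWeights

section ExpandingWeights

variable {B θ h : ℝ}

lemma rpow_neg_pow_le_rpow (hB : 0 < B) (hθ : 0 ≤ θ) (hh : 0 < h) {n : ℕ} (hn : h⁻¹ < B ^ n) :
    (B ^ (-θ)) ^ n ≤ h ^ θ := by
  rw [Real.rpow_pow_comm hB.le, Real.rpow_neg (by positivity), ← Real.inv_rpow (by positivity)]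
  exact Real.rpow_le_rpow (by positivity) (inv_le_of_inv_le₀ hh hn.le) hθ

/-- With `q = B ^ (1 - θ) > 1` the sum is `B ^ (-θ) * h * ∑ q ^ i`, and
`h * q ^ m = h ^ θ * (h * B ^ m) ^ (1 - θ) ≤ h ^ θ`. -/
lemma sum_range_pow_succ_mul_le (hB : 1 < B) (hθ1 : θ < 1) (hh : 0 < h) {m : ℕ}
    (hm : B ^ m ≤ h⁻¹) :
    ∑ i ∈ Finset.range (m + 1), (B ^ (-θ)) ^ (i + 1) * (B ^ i * h)
      ≤ B ^ (-θ) / (1 - B ^ (θ - 1)) * h ^ θ := by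
  have hB0 : 0 < B := one_pos.trans hB
  set q := B ^ (1 - θ) with hq_def
  have hq : 1 < q := Real.one_lt_rpow hB (by linarith)
  have hqB : q = B * B ^ (-θ) := by
    rw [hq_def, sub_eq_add_neg, Real.rpow_add hB0, Real.rpow_one]
  have hq_inv : q⁻¹ = B ^ (θ - 1) := by
    rw [hq_def, ← Real.rpow_neg hB0.le, neg_sub]
  have hgeom : ∑ i ∈ Finset.range (m + 1), q ^ i ≤ q ^ m / (1 - B ^ (θ - 1)) := by
    calc ∑ i ∈ Finset.range (m + 1), q ^ i = (q ^ (m + 1) - 1) / (q - 1) := geom_sum_eq hq.ne' _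
      _ ≤ q ^ (m + 1) / (q - 1) := by gcongr; linarith
      _ = q ^ m / (1 - B ^ (θ - 1)) := by
          rw [← hq_inv]
          field_simp
          ring
  have hlast : h * q ^ m ≤ h ^ θ := by
    have hhB : h * B ^ m ≤ 1 := by
      calc h * B ^ m ≤ h * h⁻¹ := by gcongr
        _ = 1 := mul_inv_cancel₀ hh.ne'
    calc h * q ^ m = h ^ θ * (h * B ^ m) ^ (1 - θ) := by
          rw [hq_def, Real.rpow_pow_comm hB0.le, Real.mul_rpow hh.le (by positivity), ← mul_assoc,
            ← Real.rpow_add hh, add_sub_cancel, Real.rpow_one]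
      _ ≤ h ^ θ * 1 := by
          gcongr
          exact Real.rpow_le_one (by positivity) hhB (by linarith)
      _ = h ^ θ := mul_one _
  have hD : 0 < 1 - B ^ (θ - 1) := sub_pos.2 (Real.rpow_lt_one_of_one_lt_of_neg hB (by linarith))
  calc ∑ i ∈ Finset.range (m + 1), (B ^ (-θ)) ^ (i + 1) * (B ^ i * h)
      = B ^ (-θ) * h * ∑ i ∈ Finset.range (m + 1), q ^ i := by
        rw [Finset.mul_sum]
        refine Finset.sum_congr rfl fun i _ => ?_
        rw [hqB, mul_pow, pow_succ]
        ring
    _ ≤ B ^ (-θ) * h * (q ^ m / (1 - B ^ (θ - 1))) := by gcongr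
    _ = B ^ (-θ) / (1 - B ^ (θ - 1)) * (h * q ^ m) := by ring
    _ ≤ B ^ (-θ) / (1 - B ^ (θ - 1)) * h ^ θ := by gcongr

lemma abs_tsum_pow_succ_mul_le_rpow (hB : 1 < B) (hθ0 : 0 < θ) (hθ1 : θ < 1) (hh0 : 0 < h)
    (hh1 : h ≤ 1) {L μ : ℝ} {d : ℕ → ℝ} (hL : 0 ≤ L) (hlip : ∀ i, |d i| ≤ L * (B ^ i * h))
    (hcap : ∀ i, |d i| ≤ μ) :
    |∑' i, (B ^ (-θ)) ^ (i + 1) * d i|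
      ≤ (L * B ^ (-θ) / (1 - B ^ (θ - 1)) + μ * B ^ (-θ) / (1 - B ^ (-θ))) * h ^ θ := by
  have hB0 : 0 < B := one_pos.trans hB
  set β := B ^ (-θ)
  have hβ0 : 0 ≤ β := by positivity
  have hβ1 : β < 1 := Real.rpow_lt_one_of_one_lt_of_neg hB (by linarith)
  have hμ : 0 ≤ μ := (abs_nonneg _).trans (hcap 0)
  obtain ⟨m, hm, hm'⟩ := exists_nat_pow_near ((one_le_inv₀ hh0).2 hh1) hB
  have hhead : |∑ i ∈ Finset.range (m + 1), β ^ (i + 1) * d i|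
      ≤ L * β / (1 - B ^ (θ - 1)) * h ^ θ :=
    calc |∑ i ∈ Finset.range (m + 1), β ^ (i + 1) * d i|
        ≤ ∑ i ∈ Finset.range (m + 1), |β ^ (i + 1) * d i| := Finset.abs_sum_le_sum_abs _ _
      _ ≤ ∑ i ∈ Finset.range (m + 1), L * (β ^ (i + 1) * (B ^ i * h)) := by
          gcongr with i
          rw [abs_mul, abs_of_nonneg (by positivity), mul_left_comm]
          gcongr
          exact hlip i
      _ = L * ∑ i ∈ Finset.range (m + 1), β ^ (i + 1) * (B ^ i * h) := by rw [Finset.mul_sum]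
      _ ≤ L * (β / (1 - B ^ (θ - 1)) * h ^ θ) := by
          gcongr
          exact sum_range_pow_succ_mul_le hB hθ1 hh0 hm
      _ = L * β / (1 - B ^ (θ - 1)) * h ^ θ := by ring
  have htail : |∑' i, β ^ (i + (m + 1) + 1) * d (i + (m + 1))| ≤ μ * β / (1 - β) * h ^ θ := by
    have hshift : ∑' i, β ^ (i + (m + 1) + 1) * d (i + (m + 1))
        = β ^ (m + 1) * ∑' i, β ^ (i + 1) * d (i + (m + 1)) := by
      rw [← tsum_mul_left]
      refine tsum_congr fun i => ?_
      ring
    rw [hshift, abs_mul, abs_of_nonneg (by positivity), mul_comm]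
    gcongr
    · exact abs_tsum_pow_succ_mul_le hβ0 hβ1 fun i => hcap _
    · exact rpow_neg_pow_le_rpow hB0 hθ0.le hh0 hm'
  rw [← (summable_pow_succ_mul hβ0 hβ1 hcap).sum_add_tsum_nat_add (m + 1)]
  calc _ ≤ _ := abs_add_le _ _
    _ ≤ _ := add_le_add hhead htail
    _ = _ := by ring

/-- Split `μ β / (1 - β) = μ β + μ β ^ 2 / (1 - β)`: the first part is absorbed by the `L` term,
the second by the `M` term. -/
lemma holder_constant_le (hB : 1 < B) (hθ0 : 0 < θ) (hθ1 : θ < 1) {L M μ : ℝ} (hL : 0 ≤ L)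
    (hM : 0 ≤ M) (hμM : μ ≤ 2 * M) (hμL : μ ≤ L / 2) :
    L * B ^ (-θ) / (1 - B ^ (θ - 1)) + μ * B ^ (-θ) / (1 - B ^ (-θ))
      ≤ 2 * L / (B ^ (-θ) * (1 - B ^ (θ - 1))) + 4 * M / (B ^ (2 * θ) * (1 - B ^ (-θ))) := by
  have hB0 : 0 < B := one_pos.trans hB
  set β := B ^ (-θ) with hβ_def
  have hβ0 : 0 < β := by positivity
  have hβ1 : β < 1 := Real.rpow_lt_one_of_one_lt_of_neg hB (by linarith)
  set D := 1 - B ^ (θ - 1)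
  have hD0 : 0 < D := sub_pos.2 (Real.rpow_lt_one_of_one_lt_of_neg hB (by linarith))
  have hD1 : D ≤ 1 := sub_le_self _ (by positivity)
  have hE : 0 < 1 - β := sub_pos.2 hβ1
  have hB2θ : B ^ (2 * θ) = (β ^ 2)⁻¹ := by
    rw [hβ_def, ← Real.rpow_natCast, ← Real.rpow_mul hB0.le, ← Real.rpow_neg hB0.le]
    ring_nf
  have hsplit : μ * β / (1 - β) = μ * β + μ * β ^ 2 / (1 - β) := by
    field_simp
    ring
  have hMterm : 4 * M / ((β ^ 2)⁻¹ * (1 - β)) = 4 * M * β ^ 2 / (1 - β) := by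
    field_simp
  have hβ2D : β ^ 2 * D ≤ 1 := by nlinarith
  have hLβ : L * β / D ≤ L / (β * D) := by
    rw [div_le_div_iff₀ hD0 (by positivity)]
    calc L * β * (β * D) = L * D * β ^ 2 := by ring
      _ ≤ L * D * 1 := by gcongr; nlinarith
      _ = L * D := mul_one _
  have hμβ : μ * β ≤ L / (β * D) := by
    rw [le_div_iff₀ (by positivity)]
    calc μ * β * (β * D) = μ * (β ^ 2 * D) := by ring
      _ ≤ L / 2 * (β ^ 2 * D) := by gcongr
      _ ≤ L / 2 * 1 := by gcongr
      _ ≤ L := by linarith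
  have hμβ2 : μ * β ^ 2 / (1 - β) ≤ 4 * M * β ^ 2 / (1 - β) := by
    gcongr
    linarith
  rw [hB2θ, hMterm, hsplit, mul_div_assoc 2 L]
  linarith [show 2 * (L / (β * D)) = 2 * L / (β * D) by ring]

end ExpandingWeights

lemma exists_abs_sub_le_rpow_of_local {f : ℝ → ℝ} {θ δ K R : ℝ} (hθ : 0 < θ) (hδ : 0 < δ)
    (hR : ∀ x, |f x| ≤ R) (hloc : ∀ x h, 0 < h → h < δ → |f (x + h) - f x| ≤ K * h ^ θ) :
    ∃ C, 0 < C ∧ ∀ x y, |f x - f y| ≤ C * |x - y| ^ θ := by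
  have hK : 0 ≤ K := by
    have h := (abs_nonneg _).trans (hloc 0 (δ / 2) (by positivity) (by linarith))
    exact (mul_nonneg_iff_of_pos_right (by positivity)).1 h
  have hR0 : 0 ≤ R := (abs_nonneg _).trans (hR 0)
  have hδθ : 0 < δ ^ θ := by positivity
  have hRδ : 0 ≤ 2 * R / δ ^ θ := by positivity
  refine ⟨K + 2 * R / δ ^ θ + 1, by positivity, ?_⟩
  intro x y
  wlog hyx : y ≤ x generalizing x y
  · rw [abs_sub_comm, abs_sub_comm x]
    exact this y x (le_of_not_ge hyx)
  rw [abs_of_nonneg (sub_nonneg.2 hyx)]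
  rcases hyx.eq_or_lt with rfl | hlt
  · simp [Real.zero_rpow hθ.ne']
  have ht : 0 < x - y := sub_pos.2 hlt
  rcases lt_or_ge (x - y) δ with hnear | hfar
  · calc |f x - f y| = |f (y + (x - y)) - f y| := by rw [add_sub_cancel]
      _ ≤ K * (x - y) ^ θ := hloc y _ ht hnear
      _ ≤ (K + 2 * R / δ ^ θ + 1) * (x - y) ^ θ := by gcongr; linarith
  · calc |f x - f y| ≤ |f x| + |f y| := abs_sub _ _
      _ ≤ 2 * R / δ ^ θ * δ ^ θ := by rw [div_mul_cancel₀ _ hδθ.ne']; linarith [hR x, hR y]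
      _ ≤ 2 * R / δ ^ θ * (x - y) ^ θ := by gcongr
      _ ≤ (K + 2 * R / δ ^ θ + 1) * (x - y) ^ θ := by gcongr; linarith

/-- in the linear case `f = E_b`, the unique bounded solution
`α x = -∑' i, v(bⁱ x) b^{-θ(i+1)}` is θ-Hölder, and for increments
`0 < h < b⁻¹/2` the Hölder constant is bounded by the explicit constant
`2M'/(b^{-θ}(1-b^{θ-1})) + 4M/(b^{2θ}(1-b^{-θ}))`. -/
theorem stmt8 (b : ℕ) (hb : 1 < b) (θ : ℝ) (hθ0 : 0 < θ) (hθ1 : θ < 1)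
    (v : ℝ → ℝ) (hv : ContDiff ℝ 1 v) (hvper : Function.Periodic v 1)
    (M M' : ℝ) (hM : ∀ y, |v y| ≤ M) (hM' : ∀ y, |deriv v y| ≤ M')
    (α : ℝ → ℝ)
    (hα : α = fun x => -∑' i : ℕ,
      v ((b : ℝ) ^ i * x) * (b : ℝ) ^ (-(θ * ((i : ℝ) + 1)))) :
    (∃ C : ℝ, 0 < C ∧ ∀ x y : ℝ, |α x - α y| ≤ C * |x - y| ^ θ) ∧
    (∀ x h : ℝ, 0 < h → h < ((b : ℝ))⁻¹ / 2 →
      |α (x + h) - α x| ≤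
        (2 * M' / ((b : ℝ) ^ (-θ) * (1 - (b : ℝ) ^ (θ - 1)))
          + 4 * M / ((b : ℝ) ^ (2 * θ) * (1 - (b : ℝ) ^ (-θ)))) * h ^ θ) := by
  set B : ℝ := (b : ℝ)
  have hB : 1 < B := Nat.one_lt_cast.2 hb
  have hβ0 : 0 ≤ B ^ (-θ) := by positivity
  have hβ1 : B ^ (-θ) < 1 := Real.rpow_lt_one_of_one_lt_of_neg hB (by linarith)
  have hM0 : 0 ≤ M := (abs_nonneg _).trans (hM 0)
  have hM'0 : 0 ≤ M' := (abs_nonneg _).trans (hM' 0)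
  have hαsum : ∀ x, α x = -∑' i : ℕ, (B ^ (-θ)) ^ (i + 1) * v (B ^ i * x) := by
    intro x
    simp only [hα, neg_inj]
    refine tsum_congr fun i => ?_
    rw [mul_comm, ← Real.rpow_mul_natCast (by positivity)]
    push_cast
    ring_nf
  have hlip := abs_sub_le_of_abs_deriv_le (hv.differentiable one_ne_zero) hM'
  have hcap := hvper.abs_sub_le_half hM'0 hlip
  have hloc : ∀ x h : ℝ, 0 < h → h < B⁻¹ / 2 → |α (x + h) - α x| ≤
      (2 * M' / (B ^ (-θ) * (1 - B ^ (θ - 1)))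
        + 4 * M / (B ^ (2 * θ) * (1 - B ^ (-θ)))) * h ^ θ := by
    intro x h hh0 hhδ
    have hh1 : h ≤ 1 := by linarith [inv_lt_one_of_one_lt₀ hB]
    rw [hαsum, hαsum, neg_sub_neg,
      ← (summable_pow_succ_mul hβ0 hβ1 fun i => hM _).tsum_sub
        (summable_pow_succ_mul hβ0 hβ1 fun i => hM _)]
    simp_rw [← mul_sub]
    refine (abs_tsum_pow_succ_mul_le_rpow hB hθ0 hθ1 hh0 hh1 hM'0 (μ := min (2 * M) (M' / 2))
      (fun i => ?_) (fun i => le_min ?_ (hcap _ _))).trans ?_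
    · refine (hlip _ _).trans_eq ?_
      rw [← mul_sub, sub_add_cancel_left, mul_neg, abs_neg, abs_of_pos (by positivity)]
    · linarith [abs_sub (v (B ^ i * x)) (v (B ^ i * (x + h))), hM (B ^ i * x), hM (B ^ i * (x + h))]
    · exact mul_le_mul_of_nonneg_right
        (holder_constant_le hB hθ0 hθ1 hM'0 hM0 (min_le_left _ _) (min_le_right _ _)) (by positivity)
  exact ⟨exists_abs_sub_le_rpow_of_local hθ0 (by positivity) (fun x => by
    rw [hαsum, abs_neg]; exact abs_tsum_pow_succ_mul_le hβ0 hβ1 fun i => hM _) hloc, hloc⟩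
end

section
/- Let λ > 1 be a natural number, f = E_λ, 0 < θ < 1, v ∈ C^{1+ε} with max|v| = M, max|v'| = M', and Γ the ε-Hölder constant of v'. Suppose c ∈ S¹ satisfies v'(c) > 0. Fix a natural N, 0 < δ₁, δ₂ ≤ 1 and h > 0 with δ₁ ≤ h λ^N ≤ δ₂, and assume dist(f^N(x), c) ≤ δ₂. Then h^{-θ} (λ^θ / δ₁^{1-θ}) |∑_{i=0}^{N} λ^{-θ(i+1)}(v(fⁱ(x+h)) − v(fⁱ(x)))| ≥ v'(c) − 2Γ δ₂^ε − 2M' / ((1 − λ^{θ-1}) λ^{1-θ}). -/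
open Real Finset

/-!
By the mean value theorem the `i`-th term of the sum is `b^{-θ} h r^i v'(ξᵢ)` with
`r = b^{1-θ} > 1` and `ξᵢ ∈ (bⁱx, bⁱ(x+h))`. Since `r > 1`, the last term dominates: the
others add up to at most `M' r^N / (r - 1)` in absolute value, while `ξ_N` lies within `2δ₂`
of `c`, so Hölder continuity of `v'` gives `v'(ξ_N) ≥ v'(c) - 2Γδ₂^ε`. After the
normalisation the factor in front is `(h b^N / δ₁)^{1-θ} ≥ 1`.
-/

lemma exists_sub_eq_deriv_mul {v : ℝ → ℝ} (hv : Differentiable ℝ v) {y t : ℝ} (ht : 0 < t) :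
    ∃ ξ ∈ Set.Ioo y (y + t), v (y + t) - v y = deriv v ξ * t := by
  obtain ⟨ξ, hξ, hslope⟩ := exists_deriv_eq_slope v (lt_add_of_pos_right y ht)
    hv.continuous.continuousOn fun z _ => (hv z).differentiableWithinAt
  refine ⟨ξ, hξ, ?_⟩
  rw [hslope, add_sub_cancel_left, div_mul_cancel₀ _ ht.ne']

lemma abs_sub_le_two_mul_rpow_of_holder {g : ℝ → ℝ} {Γ ε δ u w : ℝ}
    (hg : ∀ u w, |g u - g w| ≤ Γ * |u - w| ^ ε) (hε0 : 0 ≤ ε) (hε1 : ε ≤ 1) (hδ : 0 ≤ δ)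
    (huw : |u - w| ≤ 2 * δ) : |g u - g w| ≤ 2 * Γ * δ ^ ε := by
  have hΓ : 0 ≤ Γ := by simpa using (abs_nonneg _).trans (hg 1 0)
  have htwo : (2 : ℝ) ^ ε ≤ 2 := by
    simpa using rpow_le_rpow_of_exponent_le one_le_two hε1
  calc |g u - g w| ≤ Γ * |u - w| ^ ε := hg u w
    _ ≤ Γ * (2 * δ) ^ ε := by gcongr
    _ = Γ * (2 ^ ε * δ ^ ε) := by rw [mul_rpow zero_le_two hδ]
    _ ≤ Γ * (2 * δ ^ ε) := by gcongr
    _ = 2 * Γ * δ ^ ε := by ring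

lemma pow_mul_sub_div_le_sum_range_succ_pow_mul {r A M : ℝ} (hr : 1 < r) (hM : 0 ≤ M)
    {a : ℕ → ℝ} {N : ℕ} (ha : ∀ i < N, -M ≤ a i) (haN : A ≤ a N) :
    r ^ N * (A - M / (r - 1)) ≤ ∑ i ∈ range (N + 1), r ^ i * a i := by
  have hgeom : ∑ i ∈ range N, r ^ i ≤ r ^ N / (r - 1) := by
    rw [geom_sum_eq hr.ne', div_le_div_iff_of_pos_right (sub_pos.2 hr)]
    linarith
  have hhead : -M * ∑ i ∈ range N, r ^ i ≤ ∑ i ∈ range N, r ^ i * a i := by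
    rw [mul_sum]
    refine sum_le_sum fun i hi => ?_
    rw [mul_comm]
    exact mul_le_mul_of_nonneg_left (ha i (mem_range.1 hi)) (by positivity)
  rw [sum_range_succ]
  calc r ^ N * (A - M / (r - 1)) = -M * (r ^ N / (r - 1)) + r ^ N * A := by ring
    _ ≤ -M * ∑ i ∈ range N, r ^ i + r ^ N * a N :=
      add_le_add (mul_le_mul_of_nonpos_left hgeom (neg_nonpos.2 hM))
        (mul_le_mul_of_nonneg_left haN (by positivity))
    _ ≤ ∑ i ∈ range N, r ^ i * a i + r ^ N * a N := add_le_add_left hhead _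

lemma le_mul_abs_of_mul_le {C q K S : ℝ} (hC : 0 ≤ C) (hq : 1 ≤ q) (hS : q * K ≤ C * S) :
    K ≤ C * |S| := by
  rcases le_or_gt K 0 with hK | hK
  · exact hK.trans (by positivity)
  · calc K ≤ q * K := le_mul_of_one_le_left hK.le hq
      _ ≤ C * S := hS
      _ ≤ C * |S| := mul_le_mul_of_nonneg_left (le_abs_self S) hC

lemma rpow_neg_mul_succ_mul_pow {b : ℝ} (hb : 0 < b) (θ : ℝ) (i : ℕ) :
    b ^ (-(θ * ((i : ℝ) + 1))) * b ^ i = b ^ (-θ) * (b ^ (1 - θ)) ^ i := by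
  rw [← rpow_natCast b i, ← rpow_add hb, ← rpow_natCast (b ^ (1 - θ)) i, ← rpow_mul hb.le,
    ← rpow_add hb]
  ring_nf

lemma exists_sum_rpow_mul_sub_eq {v : ℝ → ℝ} (hv : Differentiable ℝ v) {b h : ℝ} (hb : 0 < b)
    (hh : 0 < h) (θ x : ℝ) :
    ∃ ξ : ℕ → ℝ, (∀ i, ξ i ∈ Set.Ioo (b ^ i * x) (b ^ i * x + b ^ i * h)) ∧
      ∀ N : ℕ, ∑ i ∈ range (N + 1), b ^ (-(θ * ((i : ℝ) + 1))) * (v (b ^ i * (x + h)) - v (b ^ i * x))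
        = b ^ (-θ) * h * ∑ i ∈ range (N + 1), (b ^ (1 - θ)) ^ i * deriv v (ξ i) := by
  choose ξ hξ hmvt using fun i : ℕ =>
    exists_sub_eq_deriv_mul hv (y := b ^ i * x) (mul_pos (pow_pos hb i) hh)
  refine ⟨ξ, hξ, fun N => ?_⟩
  rw [mul_sum]
  refine sum_congr rfl fun i _ => ?_
  rw [mul_add (b ^ i) x h, hmvt i]
  linear_combination (h * deriv v (ξ i)) * rpow_neg_mul_succ_mul_pow hb θ i

lemma le_rpow_neg_mul_div_mul_abs {b h δ θ K T : ℝ} {N : ℕ} (hb : 0 < b) (hδ : 0 < δ)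
    (hθ : θ < 1) (hδh : δ ≤ h * b ^ N) (hT : (b ^ (1 - θ)) ^ N * K ≤ T) :
    K ≤ h ^ (-θ) * (b ^ θ / δ ^ (1 - θ)) * |b ^ (-θ) * h * T| := by
  have hh : 0 < h := pos_of_mul_pos_left (hδ.trans_le hδh) (by positivity)
  have hscale : 1 ≤ (h * b ^ N) ^ (1 - θ) / δ ^ (1 - θ) := by
    rw [one_le_div (by positivity)]
    exact rpow_le_rpow hδ.le hδh (by linarith)
  have hnormalise : h ^ (-θ) * (b ^ θ / δ ^ (1 - θ)) * (b ^ (-θ) * h * (b ^ (1 - θ)) ^ N)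
      = (h * b ^ N) ^ (1 - θ) / δ ^ (1 - θ) := by
    rw [mul_rpow hh.le (by positivity), ← rpow_natCast b N, ← rpow_mul hb.le,
      ← rpow_natCast (b ^ (1 - θ)) N, ← rpow_mul hb.le, rpow_neg hh.le, rpow_neg hb.le,
      rpow_sub hh, rpow_one, mul_comm (N : ℝ)]
    field_simp
  refine le_mul_abs_of_mul_le (by positivity) hscale ?_
  rw [← hnormalise, mul_assoc, mul_assoc (_ * h)]
  gcongr

theorem stmt17_general (b : ℕ) (hb : 1 < b) (θ ε : ℝ) (hθ1 : θ < 1)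
    (hε0 : 0 < ε) (hε1 : ε ≤ 1)
    (v : ℝ → ℝ) (hv : ContDiff ℝ 1 v)
    (M' Γ : ℝ) (hM' : ∀ y, |deriv v y| ≤ M')
    (hΓ : ∀ u w : ℝ, |deriv v u - deriv v w| ≤ Γ * |u - w| ^ ε)
    (c : ℝ)
    (N : ℕ) (δ₁ δ₂ h : ℝ) (hδ₁0 : 0 < δ₁)
    (hhl : δ₁ ≤ h * (b : ℝ) ^ N) (hhu : h * (b : ℝ) ^ N ≤ δ₂)
    (x : ℝ) (hx : |(b : ℝ) ^ N * x - c| ≤ δ₂) :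
    h ^ (-θ) * ((b : ℝ) ^ θ / δ₁ ^ (1 - θ)) *
      |∑ i ∈ Finset.range (N + 1),
          (b : ℝ) ^ (-(θ * ((i : ℝ) + 1))) *
            (v ((b : ℝ) ^ i * (x + h)) - v ((b : ℝ) ^ i * x))|
      ≥ deriv v c - 2 * Γ * δ₂ ^ ε
        - 2 * M' / ((1 - (b : ℝ) ^ (θ - 1)) * (b : ℝ) ^ (1 - θ)) := by
  have hb0 : (0 : ℝ) < b := by positivity
  have hh : 0 < h := pos_of_mul_pos_left (hδ₁0.trans_le hhl) (by positivity)
  have hr : 1 < (b : ℝ) ^ (1 - θ) := one_lt_rpow (by exact_mod_cast hb) (by linarith)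
  have hden : (1 - (b : ℝ) ^ (θ - 1)) * (b : ℝ) ^ (1 - θ) = (b : ℝ) ^ (1 - θ) - 1 := by
    rw [sub_mul, one_mul, ← rpow_add hb0, sub_add_sub_cancel', sub_self, rpow_zero]
  obtain ⟨ξ, hξ, hsum⟩ := exists_sum_rpow_mul_sub_eq (hv.differentiable one_ne_zero) hb0 hh θ x
  have hξN : |ξ N - c| ≤ 2 * δ₂ := by
    obtain ⟨hlo, hhi⟩ := hξ N
    rw [abs_le] at hx ⊢
    constructor <;> linarith
  have hlead : deriv v c - 2 * Γ * δ₂ ^ ε ≤ deriv v (ξ N) := by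
    have := abs_sub_le_two_mul_rpow_of_holder hΓ hε0.le hε1 ((abs_nonneg _).trans hx) hξN
    linarith [(abs_le.1 this).1]
  have hM'0 : 0 ≤ M' := (abs_nonneg _).trans (hM' 0)
  have hlow := pow_mul_sub_div_le_sum_range_succ_pow_mul hr hM'0
    (fun i _ => neg_le_of_abs_le (hM' (ξ i))) hlead
  rw [ge_iff_le, hden, hsum N]
  refine le_trans ?_ (le_rpow_neg_mul_div_mul_abs hb0 hδ₁0 hθ1 hhl hlow)
  exact sub_le_sub_left (div_le_div_of_nonneg_right (by linarith) (sub_pos.2 hr).le) _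

/-- linear lower bound: for `f = E_b`, `v ∈ C^{1+ε}` 1-periodic with
`|v'| ≤ M'` and `v'` ε-Hölder with constant `Γ`, `v'(c) > 0`,
`δ₁ ≤ h b^N ≤ δ₂` and `|bᴺ x − c| ≤ δ₂` (circle distance realized on the line):
`h^{-θ} (b^θ / δ₁^{1-θ}) |∑_{i=0}^{N} b^{-θ(i+1)}(v(bⁱ(x+h)) − v(bⁱx))|
  ≥ v'(c) − 2Γ δ₂^ε − 2M'/((1 − b^{θ-1}) b^{1-θ})`. -/
theorem stmt17 (b : ℕ) (hb : 1 < b) (θ ε : ℝ) (hθ0 : 0 < θ) (hθ1 : θ < 1)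
    (hε0 : 0 < ε) (hε1 : ε ≤ 1)
    (v : ℝ → ℝ) (hv : ContDiff ℝ 1 v) (hvper : Function.Periodic v 1)
    (M M' Γ : ℝ) (hM : ∀ y, |v y| ≤ M) (hM' : ∀ y, |deriv v y| ≤ M')
    (hΓ : ∀ u w : ℝ, |deriv v u - deriv v w| ≤ Γ * |u - w| ^ ε)
    (c : ℝ) (hc : 0 < deriv v c)
    (N : ℕ) (δ₁ δ₂ h : ℝ) (hδ₁0 : 0 < δ₁) (hδ₁1 : δ₁ ≤ 1)
    (hδ₂0 : 0 < δ₂) (hδ₂1 : δ₂ ≤ 1)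
    (hh : 0 < h) (hhl : δ₁ ≤ h * (b : ℝ) ^ N) (hhu : h * (b : ℝ) ^ N ≤ δ₂)
    (x : ℝ) (hx : |(b : ℝ) ^ N * x - c| ≤ δ₂) :
    h ^ (-θ) * ((b : ℝ) ^ θ / δ₁ ^ (1 - θ)) *
      |∑ i ∈ Finset.range (N + 1),
          (b : ℝ) ^ (-(θ * ((i : ℝ) + 1))) *
            (v ((b : ℝ) ^ i * (x + h)) - v ((b : ℝ) ^ i * x))|
      ≥ deriv v c - 2 * Γ * δ₂ ^ ε
        - 2 * M' / ((1 - (b : ℝ) ^ (θ - 1)) * (b : ℝ) ^ (1 - θ)) :=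
  stmt17_general b hb θ ε hθ1 hε0 hε1 v hv M' Γ hM' hΓ c N δ₁ δ₂ h hδ₁0 hhl hhu x hx
end

section
/- Let b be an integer with b ≥ 5^{1/(1-θ)}, 0 < θ < 1, a = b^{-θ}, f = E_b, and v(x) = cos(2πx). Then the unique bounded solution α of the θ-twisted cohomological equation (which equals the classical Weierstrass function up to normalization) satisfies: for Lebesgue-almost every x ∈ ℝ/ℤ, the local Hölder exponent of α at x is exactly θ, i.e., α is θ-Hölder at x but not (θ+γ)-Hölder at x for any γ > 0. -/
/-!
Write `W x - W y = ∑ Δᵢ`, where `|Δᵢ| ≤ min (2π bⁱ |x - y|) 2 · b^{-θ(i+1)}`. Splitting the sum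
at the scale `b^N ≈ 1 / |x - y|` gives a θ-Hölder bound at every point.

Conversely, for `y = x + b^{-(m+1)}` the terms with `i > m` vanish because `b` is an integer.
If the fractional part of `bᵐ x` lies in `[1/12, 1/4]`, the phase of `Δₘ` stays in
`[π/6, 5π/6]`, so `|Δₘ| ≥ (2/b) b^{-θ(m+1)}`. Since `b^{1-θ} ≥ 5`, the terms with `i < m` add up
to at most `(π/2)/b · b^{-θ(m+1)}`, which leaves `|W x - W y| ≥ |x - y|^θ / (3b)`. The map
`x ↦ b x` is ergodic on `ℝ/ℤ`, so almost every `x` meets this condition for infinitely many `m`,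
and this rules out every exponent above `θ`.
-/

open Real MeasureTheory Filter Set Finset
open scoped Topology

lemma rpow_one_sub_eq_mul_rpow_neg {b : ℝ} (hb : 0 < b) (θ : ℝ) :
    b ^ (1 - θ) = b * b ^ (-θ) := by
  rw [sub_eq_add_neg, rpow_add hb, rpow_one]

lemma two_div_le_sin_pi_div {b : ℝ} (hb : 2 ≤ b) : 2 / b ≤ sin (π / b) := by
  have hb0 : 0 < b := by linarith
  calc 2 / b = 2 / π * (π / b) := by field_simp
    _ ≤ sin (π / b) :=
      mul_le_sin (by positivity) (div_le_div_of_nonneg_left pi_pos.le two_pos hb)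

lemma one_half_le_sin_of_mem_Icc {t : ℝ} (ht : t ∈ Icc (π / 6) (5 * π / 6)) :
    1 / 2 ≤ sin t := by
  rw [← cos_pi_div_two_sub, ← cos_abs, ← cos_pi_div_three]
  refine cos_le_cos_of_nonneg_of_le_pi (abs_nonneg _) (by linarith [pi_pos]) ?_
  rw [abs_le]
  constructor <;> linarith [ht.1, ht.2]

lemma le_abs_cos_add_sub_cos {b u : ℝ} (hb : 5 ≤ b)
    (hu : Int.fract u ∈ Icc (1 / 12 : ℝ) (1 / 4)) :
    2 / b ≤ |cos (2 * π * u + 2 * π / b) - cos (2 * π * u)| := by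
  have hb0 : 0 < b := by linarith
  have hphase : sin ((2 * π * u + 2 * π / b + 2 * π * u) / 2) =
      sin (2 * π * Int.fract u + π / b) := by
    rw [← sin_add_int_mul_two_pi (2 * π * Int.fract u + π / b) ⌊u⌋]
    congr 1
    linear_combination (-2 * π) * Int.floor_add_fract u
  have hsin1 : 1 / 2 ≤ sin (2 * π * Int.fract u + π / b) := by
    have hπb : π / b ≤ π / 5 := div_le_div_of_nonneg_left pi_pos.le (by norm_num) hb
    exact one_half_le_sin_of_mem_Icc ⟨by nlinarith [hu.1, pi_pos, div_pos pi_pos hb0],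
      by nlinarith [hu.2, pi_pos]⟩
  have hsin2 := two_div_le_sin_pi_div (by linarith : (2 : ℝ) ≤ b)
  rw [cos_sub_cos, hphase, show (2 * π * u + 2 * π / b - 2 * π * u) / 2 = π / b by ring,
    abs_of_nonpos (by nlinarith [div_pos two_pos hb0])]
  nlinarith [div_pos two_pos hb0]

theorem Ergodic.ae_frequently_mem {α : Type*} [MeasurableSpace α] {μ : Measure α}
    [IsFiniteMeasure μ] {f : α → α} (hf : Ergodic f μ) {s : Set α} (hs : MeasurableSet s)
    (h0 : μ s ≠ 0) : ∀ᵐ x ∂μ, ∃ᶠ n in atTop, f^[n] x ∈ s := by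
  set B := {x | ∃ᶠ n in atTop, f^[n] x ∈ s}
  have hB : MeasurableSet B := by
    have : B = limsup (fun n => f^[n] ⁻¹' s) atTop := by
      ext x
      simp [B, mem_limsup_iff_frequently_mem]
    rw [this]
    exact MeasurableSet.measurableSet_limsup fun n => hf.measurable.iterate n hs
  have hfB : f ⁻¹' B = B := by
    ext x
    conv_rhs => rw [mem_ofPred_eq, ← map_add_atTop_eq_nat 1, frequently_map]
    rfl
  -- Poincaré recurrence: almost every point of `s` lies in `B`.
  have hsB : μ s ≤ μ B := by
    rw [← hf.toMeasurePreserving.conservative.measure_inter_frequently_image_mem_eq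
      hs.nullMeasurableSet]
    exact measure_mono inter_subset_right
  rcases hf.ae_empty_or_univ hB hfB with hempty | huniv
  · exact absurd (nonpos_iff_eq_zero.mp (hsB.trans (ae_eq_empty.mp hempty).le)) h0
  · exact huniv.mono fun x hx => hx.mpr trivial

theorem AddCircle.ae_coe_of_ae {p : AddCircle (1 : ℝ) → Prop} (h : ∀ᵐ z, p z) :
    ∀ᵐ x : ℝ, p x := by
  rw [← Measure.restrict_univ (μ := volume), ← iUnion_Ioc_intCast ℝ, ae_restrict_iUnion_iff]
  exact fun k => (AddCircle.measurePreserving_mk 1 k).quasiMeasurePreserving.ae h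

theorem ae_frequently_fract_pow_mul_mem_Icc {b : ℕ} (hb : 1 < b) {a c : ℝ} (ha : 0 ≤ a)
    (hac : a < c) (hc : c < 1) :
    ∀ᵐ x : ℝ, ∃ᶠ n in atTop, Int.fract ((b : ℝ) ^ n * x) ∈ Icc a c := by
  set A : Set (AddCircle (1 : ℝ)) := (↑) '' Icc a c
  have hA : MeasurableSet A :=
    (isCompact_Icc.image (AddCircle.continuous_mk' 1)).isClosed.measurableSet
  have hA0 : volume A ≠ 0 := by
    rw [AddCircle.add_projection_respects_measure 1 0 hA]
    have hsub : Ioo a c ⊆ (↑) ⁻¹' A ∩ Ioc 0 (0 + 1) := fun t ht =>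
      ⟨mem_image_of_mem _ (Ioo_subset_Icc_self ht), by linarith [ht.1], by linarith [ht.2]⟩
    exact ((measure_mono hsub).trans_lt' (by simpa using hac)).ne'
  filter_upwards [AddCircle.ae_coe_of_ae ((AddCircle.ergodic_nsmul hb).ae_frequently_mem hA hA0)]
    with x hx
  refine hx.mono fun n hn => ?_
  obtain ⟨t, ht, hteq⟩ := hn
  rw [smul_iterate_apply, ← AddCircle.coe_nsmul, nsmul_eq_mul, Nat.cast_pow,
    ← AddCircle.coe_fract ((b : ℝ) ^ n * x)] at hteq
  have hfract := (AddCircle.coe_eq_coe_iff_of_mem_Ico (p := 1) (a := 0)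
    ⟨ha.trans ht.1, by linarith [ht.2]⟩
    ⟨Int.fract_nonneg _, by simpa using Int.fract_lt_one _⟩).mp hteq
  exact hfract ▸ ht

theorem not_exists_holder_at_of_frequently {f : ℝ → ℝ} {x θ γ c : ℝ} (hc : 0 < c)
    (hγ : 0 < γ) {h : ℕ → ℝ} (hpos : ∀ m, 0 < h m) (hlim : Tendsto h atTop (𝓝 0))
    (hfreq : ∃ᶠ m in atTop, c * h m ^ θ ≤ |f x - f (x + h m)|) :
    ¬∃ C ε : ℝ, 0 < ε ∧ ∀ y, |y - x| < ε →
      |f x - f y| ≤ C * |x - y| ^ (θ + γ) := by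
  rintro ⟨C, ε, hε, hC⟩
  have hCh : Tendsto (fun m => C * h m ^ γ) atTop (𝓝 0) := by
    simpa [zero_rpow hγ.ne'] using (hlim.rpow_const (Or.inr hγ.le)).const_mul C
  obtain ⟨m, hm, hmε, hmc⟩ := (hfreq.and_eventually
    ((hlim.eventually (gt_mem_nhds hε)).and (hCh.eventually (gt_mem_nhds hc)))).exists
  have hdist : |x - (x + h m)| = h m := by
    rw [sub_add_cancel_left, abs_neg, abs_of_pos (hpos m)]
  have hy := hC (x + h m) (by rwa [add_sub_cancel_left, abs_of_pos (hpos m)])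
  rw [hdist, rpow_add (hpos m)] at hy
  linarith [mul_lt_mul_of_pos_right hmc (rpow_pos_of_pos (hpos m) θ)]

noncomputable def weierstrassFun (b θ x : ℝ) : ℝ :=
  -∑' i : ℕ, cos (2 * π * b ^ i * x) * b ^ (-(θ * ((i : ℝ) + 1)))

noncomputable def weierstrassTermDiff (b θ x y : ℝ) (i : ℕ) : ℝ :=
  (cos (2 * π * b ^ i * y) - cos (2 * π * b ^ i * x)) * (b ^ (-θ)) ^ (i + 1)

section Weierstrass

variable {b θ : ℝ}

lemma abs_weierstrassTermDiff_le_two (hb : 0 ≤ b) (x y : ℝ) (i : ℕ) :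
    |weierstrassTermDiff b θ x y i| ≤ 2 * (b ^ (-θ)) ^ (i + 1) := by
  have hr : 0 ≤ (b ^ (-θ)) ^ (i + 1) := by positivity
  rw [weierstrassTermDiff, abs_mul, abs_of_nonneg hr]
  gcongr
  calc _ ≤ |cos (2 * π * b ^ i * y)| + |cos (2 * π * b ^ i * x)| := abs_sub _ _
    _ ≤ 2 := by
      linarith [abs_cos_le_one (2 * π * b ^ i * y), abs_cos_le_one (2 * π * b ^ i * x)]

lemma abs_weierstrassTermDiff_le_geom (hb : 0 < b) (x y : ℝ) (i : ℕ) :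
    |weierstrassTermDiff b θ x y i| ≤ 2 * π * b ^ (-θ) * |x - y| * (b ^ (1 - θ)) ^ i := by
  have hr : 0 ≤ (b ^ (-θ)) ^ (i + 1) := by positivity
  have hcos :
      |cos (2 * π * b ^ i * y) - cos (2 * π * b ^ i * x)| ≤ 2 * π * b ^ i * |x - y| := by
    calc _ ≤ |2 * π * b ^ i * y - 2 * π * b ^ i * x| := abs_cos_sub_cos_le _ _
      _ = 2 * π * b ^ i * |x - y| := by
        rw [← mul_sub, abs_mul, abs_of_nonneg (by positivity), abs_sub_comm]
  rw [weierstrassTermDiff, abs_mul, abs_of_nonneg hr, rpow_one_sub_eq_mul_rpow_neg hb]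
  calc _ ≤ 2 * π * b ^ i * |x - y| * (b ^ (-θ)) ^ (i + 1) := by gcongr
    _ = _ := by ring

lemma summable_rpow_neg_pow_succ (hb : 1 < b) (hθ : 0 < θ) :
    Summable fun i : ℕ => (b ^ (-θ)) ^ (i + 1) :=
  (summable_nat_add_iff 1).mpr <| summable_geometric_of_lt_one (by positivity)
    (rpow_lt_one_of_one_lt_of_neg hb (neg_neg_of_pos hθ))

lemma summable_weierstrassTermDiff (hb : 1 < b) (hθ : 0 < θ) (x y : ℝ) :
    Summable (weierstrassTermDiff b θ x y) :=
  .of_norm_bounded ((summable_rpow_neg_pow_succ hb hθ).mul_left 2)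
    (abs_weierstrassTermDiff_le_two (by linarith) x y)

lemma weierstrassFun_sub_eq_tsum (hb : 1 < b) (hθ : 0 < θ) (x y : ℝ) :
    weierstrassFun b θ x - weierstrassFun b θ y = ∑' i, weierstrassTermDiff b θ x y i := by
  have hterm (z : ℝ) (i : ℕ) : cos (2 * π * b ^ i * z) * b ^ (-(θ * ((i : ℝ) + 1))) =
      cos (2 * π * b ^ i * z) * (b ^ (-θ)) ^ (i + 1) := by
    rw [← rpow_mul_natCast (by linarith)]
    push_cast
    ring_nf
  have hsum (z : ℝ) :
      Summable fun i : ℕ => cos (2 * π * b ^ i * z) * (b ^ (-θ)) ^ (i + 1) :=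
    .of_norm_bounded (summable_rpow_neg_pow_succ hb hθ) fun i => by
      rw [norm_mul, norm_of_nonneg (by positivity : (0 : ℝ) ≤ (b ^ (-θ)) ^ (i + 1))]
      exact mul_le_of_le_one_left (by positivity) (abs_cos_le_one _)
  simp only [weierstrassFun, hterm, weierstrassTermDiff, sub_mul]
  rw [(hsum y).tsum_sub (hsum x)]
  ring

lemma sum_range_abs_weierstrassTermDiff_le (hb : 1 < b) (hθ : θ < 1) (x y : ℝ) (N : ℕ) :
    ∑ i ∈ range N, |weierstrassTermDiff b θ x y i| ≤
      2 * π * b ^ (-θ) * |x - y| * ((b ^ (1 - θ)) ^ N / (b ^ (1 - θ) - 1)) := by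
  have hc : 1 < b ^ (1 - θ) := one_lt_rpow hb (by linarith)
  calc _ ≤ ∑ i ∈ range N, 2 * π * b ^ (-θ) * |x - y| * (b ^ (1 - θ)) ^ i :=
        sum_le_sum fun i _ => abs_weierstrassTermDiff_le_geom (by linarith) x y i
    _ = 2 * π * b ^ (-θ) * |x - y| * ∑ i ∈ range N, (b ^ (1 - θ)) ^ i := by rw [mul_sum]
    _ ≤ _ := by
      rw [geom_sum_eq hc.ne']
      gcongr
      linarith

lemma tsum_abs_weierstrassTermDiff_nat_add_le (hb : 1 < b) (hθ : 0 < θ) (x y : ℝ) (N : ℕ) :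
    ∑' i, |weierstrassTermDiff b θ x y (i + N)| ≤
      2 * (b ^ (-θ)) ^ (N + 1) / (1 - b ^ (-θ)) := by
  have hr0 : 0 ≤ b ^ (-θ) := by positivity
  have hr1 : b ^ (-θ) < 1 := rpow_lt_one_of_one_lt_of_neg hb (neg_neg_of_pos hθ)
  have hgeom := (summable_geometric_of_lt_one hr0 hr1).mul_left (2 * (b ^ (-θ)) ^ (N + 1))
  calc _ ≤ ∑' i, 2 * (b ^ (-θ)) ^ (N + 1) * (b ^ (-θ)) ^ i := by
        refine Summable.tsum_le_tsum (fun i => ?_)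
          ((summable_nat_add_iff N).mpr (summable_weierstrassTermDiff hb hθ x y).abs) hgeom
        calc _ ≤ 2 * (b ^ (-θ)) ^ (i + N + 1) := abs_weierstrassTermDiff_le_two (by linarith) ..
          _ = _ := by ring
    _ = _ := by rw [tsum_mul_left, tsum_geometric_of_lt_one hr0 hr1, div_eq_mul_inv]

lemma abs_weierstrassFun_sub_le (hb : 1 < b) (hθ0 : 0 < θ) (hθ1 : θ < 1) (x y : ℝ) (N : ℕ) :
    |weierstrassFun b θ x - weierstrassFun b θ y| ≤
      2 * π * b ^ (-θ) * |x - y| * ((b ^ (1 - θ)) ^ N / (b ^ (1 - θ) - 1)) +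
        2 * (b ^ (-θ)) ^ (N + 1) / (1 - b ^ (-θ)) := by
  have hs := summable_weierstrassTermDiff hb hθ0 x y
  rw [weierstrassFun_sub_eq_tsum hb hθ0, ← hs.sum_add_tsum_nat_add N]
  refine (abs_add_le _ _).trans (add_le_add ?_ ?_)
  · exact (abs_sum_le_sum_abs _ _).trans (sum_range_abs_weierstrassTermDiff_le hb hθ1 x y N)
  · have htail := norm_tsum_le_tsum_norm
      ((summable_nat_add_iff (f := fun i => ‖weierstrassTermDiff b θ x y i‖) N).mpr hs.norm)
    simp only [Real.norm_eq_abs] at htail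
    exact htail.trans (tsum_abs_weierstrassTermDiff_nat_add_le hb hθ0 x y N)

lemma exists_scale_of_le_one (hb : 1 < b) (hθ0 : 0 < θ) (hθ1 : θ < 1) {h : ℝ} (hh0 : 0 < h)
    (hh1 : h ≤ 1) :
    ∃ N : ℕ, h * (b ^ (1 - θ)) ^ N ≤ b ^ (1 - θ) * h ^ θ ∧
      (b ^ (-θ)) ^ N ≤ h ^ θ := by
  obtain ⟨n, hn, hn'⟩ := exists_nat_pow_near ((one_le_inv₀ hh0).mpr hh1) hb
  refine ⟨n + 1, ?_, ?_⟩
  · rw [pow_succ, rpow_pow_comm (by linarith)]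
    calc h * ((b ^ n) ^ (1 - θ) * b ^ (1 - θ)) ≤ h * (h⁻¹ ^ (1 - θ) * b ^ (1 - θ)) := by
          gcongr
      _ = b ^ (1 - θ) * h ^ θ := by
          rw [inv_rpow hh0.le, rpow_sub hh0, rpow_one]
          field_simp
  · rw [rpow_pow_comm (by linarith)]
    calc (b ^ (n + 1)) ^ (-θ) ≤ h⁻¹ ^ (-θ) :=
          rpow_le_rpow_of_nonpos (by positivity) hn'.le (by linarith)
      _ = h ^ θ := by rw [inv_rpow hh0.le, rpow_neg hh0.le, inv_inv]

theorem exists_abs_weierstrassFun_sub_le_mul_rpow (hb : 1 < b) (hθ0 : 0 < θ) (hθ1 : θ < 1) :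
    ∃ C > 0, ∀ x y, |x - y| ≤ 1 →
      |weierstrassFun b θ x - weierstrassFun b θ y| ≤ C * |x - y| ^ θ := by
  set r := b ^ (-θ)
  set c := b ^ (1 - θ)
  have hr0 : 0 < r := by positivity
  have hr1 : 0 < 1 - r := sub_pos.mpr (rpow_lt_one_of_one_lt_of_neg hb (neg_neg_of_pos hθ0))
  have hc : 0 < c - 1 := sub_pos.mpr (one_lt_rpow hb (by linarith))
  refine ⟨2 * π * r / (c - 1) * c + 2 * r / (1 - r), by positivity, fun x y hxy => ?_⟩
  rcases eq_or_ne x y with rfl | hne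
  · simp [zero_rpow hθ0.ne']
  obtain ⟨N, hNc, hNr⟩ :=
    exists_scale_of_le_one hb hθ0 hθ1 (abs_pos.mpr (sub_ne_zero.mpr hne)) hxy
  calc _ ≤ 2 * π * r * |x - y| * (c ^ N / (c - 1)) + 2 * r ^ (N + 1) / (1 - r) :=
        abs_weierstrassFun_sub_le hb hθ0 hθ1 x y N
    _ = 2 * π * r / (c - 1) * (|x - y| * c ^ N) + 2 * r / (1 - r) * r ^ N := by ring
    _ ≤ 2 * π * r / (c - 1) * (c * |x - y| ^ θ) + 2 * r / (1 - r) * |x - y| ^ θ := by gcongr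
    _ = _ := by ring

end Weierstrass

section NatBase

variable {b : ℕ} {θ : ℝ}

lemma weierstrassTermDiff_eq_zero_of_lt (hb : b ≠ 0) {m i : ℕ} (hmi : m < i) (x : ℝ) :
    weierstrassTermDiff b θ x (x + ((b : ℝ) ^ (m + 1))⁻¹) i = 0 := by
  obtain ⟨k, rfl⟩ := Nat.exists_eq_add_of_le hmi
  have hshift : 2 * π * (b : ℝ) ^ (m + 1 + k) * (x + ((b : ℝ) ^ (m + 1))⁻¹) =
      2 * π * (b : ℝ) ^ (m + 1 + k) * x + ((b ^ k : ℕ) : ℝ) * (2 * π) := by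
    push_cast
    field_simp
    ring
  rw [weierstrassTermDiff, hshift, cos_add_nat_mul_two_pi, sub_self, zero_mul]

lemma weierstrassFun_sub_eq_sum (hb : 1 < b) (hθ : 0 < θ) (x : ℝ) (m : ℕ) :
    weierstrassFun b θ x - weierstrassFun b θ (x + ((b : ℝ) ^ (m + 1))⁻¹) =
      ∑ i ∈ range (m + 1), weierstrassTermDiff b θ x (x + ((b : ℝ) ^ (m + 1))⁻¹) i := by
  rw [weierstrassFun_sub_eq_tsum (by exact_mod_cast hb) hθ]
  exact tsum_eq_sum fun i hi => weierstrassTermDiff_eq_zero_of_lt (by omega)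
    (by simpa using hi) x

lemma le_abs_weierstrassTermDiff_of_fract_mem (hb : 5 ≤ (b : ℝ)) {x : ℝ} {m : ℕ}
    (hx : Int.fract ((b : ℝ) ^ m * x) ∈ Icc (1 / 12 : ℝ) (1 / 4)) :
    2 / b * ((b : ℝ) ^ (-θ)) ^ (m + 1) ≤
      |weierstrassTermDiff b θ x (x + ((b : ℝ) ^ (m + 1))⁻¹) m| := by
  have hshift : 2 * π * (b : ℝ) ^ m * (x + ((b : ℝ) ^ (m + 1))⁻¹) =
      2 * π * ((b : ℝ) ^ m * x) + 2 * π / b := by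
    rw [pow_succ]
    field_simp
  have hr : (0 : ℝ) ≤ ((b : ℝ) ^ (-θ)) ^ (m + 1) := by positivity
  have hcos := le_abs_cos_add_sub_cos hb hx
  rw [← mul_assoc] at hcos
  rw [weierstrassTermDiff, hshift, ← mul_assoc, abs_mul, abs_of_nonneg hr]
  exact mul_le_mul_of_nonneg_right hcos hr

lemma sum_range_abs_weierstrassTermDiff_le_rpow_neg_pow (hb : 5 ≤ (b : ℝ)) (hθ1 : θ < 1)
    (hc : 5 ≤ (b : ℝ) ^ (1 - θ)) (x : ℝ) (m : ℕ) :
    ∑ i ∈ range m, |weierstrassTermDiff b θ x (x + ((b : ℝ) ^ (m + 1))⁻¹) i| ≤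
      π / 2 / b * ((b : ℝ) ^ (-θ)) ^ (m + 1) := by
  have hb0 : (0 : ℝ) < b := by linarith
  have hxy : |x - (x + ((b : ℝ) ^ (m + 1))⁻¹)| = ((b : ℝ) ^ (m + 1))⁻¹ := by
    rw [abs_sub_comm, add_sub_cancel_left, abs_of_pos (by positivity)]
  calc _ ≤ 2 * π * (b : ℝ) ^ (-θ) * |x - (x + ((b : ℝ) ^ (m + 1))⁻¹)| *
        (((b : ℝ) ^ (1 - θ)) ^ m / ((b : ℝ) ^ (1 - θ) - 1)) :=
        sum_range_abs_weierstrassTermDiff_le (by linarith) hθ1 _ _ m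
    _ = 2 * π / ((b : ℝ) ^ (1 - θ) - 1) / b * ((b : ℝ) ^ (-θ)) ^ (m + 1) := by
        rw [hxy, rpow_one_sub_eq_mul_rpow_neg hb0]
        field_simp
        ring
    _ ≤ π / 2 / b * ((b : ℝ) ^ (-θ)) ^ (m + 1) := by
        refine mul_le_mul_of_nonneg_right (div_le_div_of_nonneg_right ?_ hb0.le) (by positivity)
        rw [div_le_div_iff₀ (by linarith) two_pos]
        nlinarith [pi_pos]

theorem le_abs_weierstrassFun_sub_of_fract_mem (hb : 5 ≤ (b : ℝ)) (hθ0 : 0 < θ)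
    (hθ1 : θ < 1) (hc : 5 ≤ (b : ℝ) ^ (1 - θ)) {x : ℝ} {m : ℕ}
    (hx : Int.fract ((b : ℝ) ^ m * x) ∈ Icc (1 / 12 : ℝ) (1 / 4)) :
    1 / (3 * b) * ((b : ℝ) ^ (m + 1))⁻¹ ^ θ ≤
      |weierstrassFun b θ x - weierstrassFun b θ (x + ((b : ℝ) ^ (m + 1))⁻¹)| := by
  have hb0 : (0 : ℝ) < b := by linarith
  have hpow : ((b : ℝ) ^ (m + 1))⁻¹ ^ θ = ((b : ℝ) ^ (-θ)) ^ (m + 1) := by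
    rw [inv_rpow (by positivity), ← rpow_neg (by positivity), ← rpow_pow_comm hb0.le]
  have hmain := le_abs_weierstrassTermDiff_of_fract_mem (θ := θ) hb hx
  have hhead := sum_range_abs_weierstrassTermDiff_le_rpow_neg_pow hb hθ1 hc x m
  rw [weierstrassFun_sub_eq_sum (by exact_mod_cast (by linarith : (1 : ℝ) < b)) hθ0,
    sum_range_succ, hpow]
  set D := weierstrassTermDiff b θ x (x + ((b : ℝ) ^ (m + 1))⁻¹)
  set r := (b : ℝ) ^ (-θ)
  calc 1 / (3 * b) * r ^ (m + 1) ≤ 2 / b * r ^ (m + 1) - π / 2 / b * r ^ (m + 1) := by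
        rw [← sub_mul]
        gcongr
        rw [div_sub_div_same, div_le_div_iff₀ (by positivity) hb0]
        nlinarith [pi_lt_d2]
    _ ≤ |D m| - |∑ i ∈ range m, D i| := by linarith [abs_sum_le_sum_abs D (range m)]
    _ ≤ |∑ i ∈ range m, D i + D m| := by linarith [abs_add' (D m) (∑ i ∈ range m, D i)]

end NatBase

/-- for `b ≥ 5^{1/(1-θ)}` an integer, `0 < θ < 1`, the (renormalized)
Weierstrass function `α x = -∑' i, cos(2π bⁱ x) b^{-θ(i+1)}` has, at Lebesgue-almost
every `x`, local Hölder exponent exactly `θ`: it is θ-Hölder at `x`, but not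
`(θ+γ)`-Hölder at `x` for any `γ > 0`. -/
theorem stmt19 (b : ℕ) (θ : ℝ) (hθ0 : 0 < θ) (hθ1 : θ < 1)
    (hb : (5 : ℝ) ^ (1 / (1 - θ)) ≤ (b : ℝ))
    (α : ℝ → ℝ)
    (hα : α = fun x => -∑' i : ℕ,
      Real.cos (2 * π * (b : ℝ) ^ i * x) * (b : ℝ) ^ (-(θ * ((i : ℝ) + 1)))) :
    ∀ᵐ x ∂(volume : Measure ℝ),
      (∃ C > 0, ∃ ε > 0, ∀ y : ℝ, |y - x| < ε →
        |α x - α y| ≤ C * |x - y| ^ θ) ∧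
      (∀ γ : ℝ, 0 < γ →
        ¬∃ C ε : ℝ, 0 < ε ∧ ∀ y : ℝ, |y - x| < ε →
          |α x - α y| ≤ C * |x - y| ^ (θ + γ)) := by
  obtain rfl : α = weierstrassFun b θ := hα
  have hθ' : 0 < 1 - θ := by linarith
  have hb5 : (5 : ℝ) ≤ b :=
    (self_le_rpow_of_one_le (by norm_num) ((one_le_div hθ').mpr (by linarith))).trans hb
  have hc5 : (5 : ℝ) ≤ (b : ℝ) ^ (1 - θ) :=
    calc (5 : ℝ) = (5 ^ (1 / (1 - θ))) ^ (1 - θ) := by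
          rw [← rpow_mul (by norm_num), one_div_mul_cancel hθ'.ne', rpow_one]
      _ ≤ (b : ℝ) ^ (1 - θ) := rpow_le_rpow (by positivity) hb hθ'.le
  have hb1 : 1 < b := by exact_mod_cast (by linarith : (1 : ℝ) < b)
  obtain ⟨C, hC0, hC⟩ :=
    exists_abs_weierstrassFun_sub_le_mul_rpow (b := b) (by exact_mod_cast hb1) hθ0 hθ1
  filter_upwards [ae_frequently_fract_pow_mul_mem_Icc hb1 (a := 1 / 12) (c := 1 / 4)
    (by norm_num) (by norm_num) (by norm_num)] with x hx
  refine ⟨⟨C, hC0, 1, one_pos, fun y hy => hC x y (by rw [abs_sub_comm]; exact hy.le)⟩,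
    fun γ hγ => ?_⟩
  refine not_exists_holder_at_of_frequently (by positivity) hγ (fun m => by positivity) ?_
    (hx.mono fun m hm => le_abs_weierstrassFun_sub_of_fract_mem hb5 hθ0 hθ1 hc5 hm)
  exact tendsto_inv_atTop_zero.comp
    ((tendsto_pow_atTop_atTop_of_one_lt (by linarith)).comp (tendsto_add_atTop_nat 1))
end
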